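/- arXiv:0902.4233 — 4 statements merged into one kernel-verified Lean document; each statement's English description precedes it below -/
import Mathlib

section
/- Billiard reflection in the ellipse preserves the confocal caustic parameter: if a chord of the ellipse E from point P to point Q is tangent to a confocal conic C_μ (with 0 < μ < a, μ ≠ b), and the chord from Q to R is obtained by the billiard reflection law at Q (angle of incidence equals angle of reflection with respect to the tangent line of E at Q), then the chord QR is also tangent to C_μ. -/
set_option maxHeartbeats 1600000 in
/-- Billiard reflection in the ellipse preserves the confocal caustic: if the chord `PQ`
of `E` lies on a line `ux + vy = 1` tangent to `C_μ`, and `w` is the billiard reflection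
at `Q` of the unit direction of `PQ`, then the line through `Q` with direction `w` is
also tangent to `C_μ` (in the homogeneous line-tangency form
`p·x + q·y = r`, `(a-μ)p² + (b-μ)q² = r²`). -/
theorem stmt5 (a b μ : ℝ) (hab : b < a) (hb : 0 < b)
    (hμ0 : 0 < μ) (hμa : μ < a) (hμb : μ ≠ b)
    (P Q : ℝ × ℝ)
    (hP : P.1^2/a + P.2^2/b = 1) (hQ : Q.1^2/a + Q.2^2/b = 1) (hPQ : P ≠ Q)
    (u v : ℝ) (hlP : u*P.1 + v*P.2 = 1) (hlQ : u*Q.1 + v*Q.2 = 1)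
    (htan : (a-μ)*u^2 + (b-μ)*v^2 = 1)
    (v1 v2 : ℝ)
    (hv1 : v1 = (Q.1 - P.1)/Real.sqrt ((Q.1 - P.1)^2 + (Q.2 - P.2)^2))
    (hv2 : v2 = (Q.2 - P.2)/Real.sqrt ((Q.1 - P.1)^2 + (Q.2 - P.2)^2))
    (n1 n2 : ℝ)
    (hn1 : n1 = (Q.1/a)/Real.sqrt ((Q.1/a)^2 + (Q.2/b)^2))
    (hn2 : n2 = (Q.2/b)/Real.sqrt ((Q.1/a)^2 + (Q.2/b)^2))
    (w1 w2 : ℝ)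
    (hw1 : w1 = v1 - 2*(v1*n1 + v2*n2)*n1)
    (hw2 : w2 = v2 - 2*(v1*n1 + v2*n2)*n2) :
    ∃ p q r : ℝ, (p, q) ≠ ((0 : ℝ), (0 : ℝ)) ∧
      p*Q.1 + q*Q.2 = r ∧
      p*(Q.1 + w1) + q*(Q.2 + w2) = r ∧
      (a-μ)*p^2 + (b-μ)*q^2 = r^2 := by
  have ha : 0 < a := hb.trans hab
  have ha' : a ≠ 0 := ne_of_gt ha
  have hb' : b ≠ 0 := ne_of_gt hb
  set x := Q.1 with hx
  clear_value x
  set y := Q.2 with hy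
  clear_value y
  -- cleared ellipse equation
  have hQE : b*x^2 + a*y^2 = a*b := by
    field_simp at hQ; linarith
  -- the chord direction
  set d1 := x - P.1 with hd1
  clear_value d1
  set d2 := y - P.2 with hd2
  clear_value d2
  have hdne : 0 < d1^2 + d2^2 := by
    rcases eq_or_ne d1 0 with h|h
    · have h2 : d2 ≠ 0 := by
        intro h2
        apply hPQ
        have e1 : P.1 = x := by rw [hd1] at h; linarith
        have e2 : P.2 = y := by rw [hd2] at h2; linarith
        rw [hx] at e1; rw [hy] at e2
        exact Prod.ext e1 e2
      positivity
    · positivity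
  set D := Real.sqrt (d1^2 + d2^2) with hD
  clear_value D
  have hDpos : 0 < D := by rw [hD]; exact Real.sqrt_pos.mpr hdne
  have hD' : D ≠ 0 := ne_of_gt hDpos
  have hD2 : D^2 = d1^2 + d2^2 := by rw [hD]; exact Real.sq_sqrt hdne.le
  -- v is a unit vector
  have hvunit : v1^2 + v2^2 = 1 := by
    rw [hv1, hv2]
    field_simp
    linear_combination -hD2
  -- the normal data
  set m1 := x/a with hm1
  clear_value m1
  set m2 := y/b with hm2
  clear_value m2
  have hMpos : 0 < m1^2 + m2^2 := by
    rcases eq_or_ne x 0 with h|h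
    · have h2 : y ≠ 0 := by
        intro h2; rw [h, h2] at hQE; norm_num at hQE
        rcases hQE with h3|h3
        · exact ha.ne' h3
        · exact hb.ne' h3
      have h2' : m2 ≠ 0 := by rw [hm2]; exact div_ne_zero h2 hb'
      positivity
    · have h1' : m1 ≠ 0 := by rw [hm1]; exact div_ne_zero h ha'
      positivity
  set N := Real.sqrt (m1^2 + m2^2) with hN
  clear_value N
  have hNpos : 0 < N := by rw [hN]; exact Real.sqrt_pos.mpr hMpos
  have hN' : N ≠ 0 := ne_of_gt hNpos
  have hN2 : N^2 = m1^2 + m2^2 := by rw [hN]; exact Real.sq_sqrt hMpos.le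
  -- n is unit
  have hnunit : n1^2 + n2^2 = 1 := by
    rw [hn1, hn2]
    field_simp
    linear_combination -hN2
  -- reflection preserves norm
  have hwnorm : w1^2 + w2^2 = v1^2 + v2^2 := by
    rw [hw1, hw2]
    linear_combination (4*(v1*n1 + v2*n2)^2) * hnunit
  -- reflection flips the m-component (cleared form)
  have hnm : n1*m1 + n2*m2 = N := by
    rw [hn1, hn2]
    field_simp
    linear_combination -hN2
  have hsN : (v1*n1 + v2*n2)*N = v1*m1 + v2*m2 := by
    rw [hn1, hn2]
    field_simp
  have hwmm : w1*m1 + w2*m2 = -(v1*m1 + v2*m2) := by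
    rw [hw1, hw2]
    linear_combination (-2*(v1*n1+v2*n2))*hnm - 2*hsN
  have hwm : b*w1*x + a*w2*y = -(b*v1*x + a*v2*y) := by
    have e1 : x = a*m1 := by rw [hm1]; field_simp
    have e2 : y = b*m2 := by rw [hm2]; field_simp
    rw [e1, e2]
    linear_combination a*b*hwmm
  -- the chord line is tangent: F(v) = 0
  have hs2 : 0 < u^2 + v^2 := by
    rcases eq_or_ne u 0 with h|h
    · have h2 : v ≠ 0 := by
        intro h2; rw [h, h2] at hlQ; norm_num at hlQ
      positivity
    · positivity
  have hs2' : u^2 + v^2 ≠ 0 := ne_of_gt hs2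
  have hud : u*d1 + v*d2 = 0 := by
    rw [hd1, hd2]; linear_combination hlQ - hlP
  set t := (u*d2 - v*d1)/(u^2+v^2) with ht
  clear_value t
  have hd2t : d2 = t*u := by
    rw [ht]; field_simp; linear_combination v * hud
  have hd1t : d1 = -(t*v) := by
    rw [ht]; field_simp; linear_combination u * hud
  have hFd : (a-μ)*d2^2 + (b-μ)*d1^2 - (d2*x - d1*y)^2 = 0 := by
    rw [hd2t, hd1t]
    linear_combination t^2*htan - t^2*(u*x + v*y + 1)*hlQ
  have hFv : (a-μ)*v2^2 + (b-μ)*v1^2 - (v2*x - v1*y)^2 = 0 := by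
    rw [hv1, hv2]
    field_simp
    linear_combination hFd
  -- key rank-one identity on the ellipse
  have hKI : ∀ e1 e2 : ℝ,
      (a*e2^2 + b*e1^2 - (e2*x - e1*y)^2) * (b^2*x^2 + a^2*y^2)^2 =
      (a^3*y^2 + b^3*x^2 - x^2*y^2*(a-b)^2) * (b*e1*x + a*e2*y)^2 := by
    intro e1 e2
    linear_combination (-y^4*e1^2*a^3 + 2*x*y^3*e1*e2*a^3 + x^2*y^2*e2^2*a*b^2
      - 2*x^2*y^2*e2^2*a^2*b - 2*x^2*y^2*e1^2*a*b^2 + x^2*y^2*e1^2*a^2*b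
      + 2*x^3*y*e1*e2*b^3 - x^4*e2^2*b^3) * hQE
  -- S > 0
  have hSpos : 0 < b^2*x^2 + a^2*y^2 := by
    rcases eq_or_ne x 0 with h|h
    · have h2 : y ≠ 0 := by
        intro h2; rw [h, h2] at hQE; norm_num at hQE
        rcases hQE with h3|h3
        · exact ha.ne' h3
        · exact hb.ne' h3
      positivity
    · positivity
  -- main computation: F(w) * S^2 = 0
  have hmain : ((a-μ)*w2^2 + (b-μ)*w1^2 - (w2*x - w1*y)^2) * (b^2*x^2 + a^2*y^2)^2 = 0 := by
    have h1 := hKI w1 w2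
    have h2 := hKI v1 v2
    linear_combination h1 - h2
      + (a^3*y^2 + b^3*x^2 - x^2*y^2*(a-b)^2) * ((b*w1*x + a*w2*y) - (b*v1*x + a*v2*y)) * hwm
      - μ*(b^2*x^2 + a^2*y^2)^2 * hwnorm + (b^2*x^2 + a^2*y^2)^2 * hFv
  have hFw : (a-μ)*w2^2 + (b-μ)*w1^2 - (w2*x - w1*y)^2 = 0 := by
    have hS2 : (b^2*x^2 + a^2*y^2)^2 ≠ 0 := pow_ne_zero 2 (ne_of_gt hSpos)
    exact (mul_eq_zero.mp hmain).resolve_right hS2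
  -- conclude
  refine ⟨w2, -w1, w2*x - w1*y, ?_, by ring, by ring, by linear_combination hFw⟩
  intro hcon
  have hw2z : w2 = 0 := (Prod.mk.injEq _ _ _ _ ▸ hcon).1
  have hw1z : w1 = 0 := by
    have := (Prod.mk.injEq _ _ _ _ ▸ hcon).2
    exact neg_eq_zero.mp this
  rw [hw1z, hw2z] at hwnorm
  rw [hvunit] at hwnorm
  norm_num at hwnorm
end

section
/- Confocal quadrics in ℝ³ intersect orthogonally: if λ ≠ μ (both outside {a,b,c}) and (x₀,y₀,z₀) lies on both Q_λ and Q_μ, then the gradients of the defining functions Q_λ and Q_μ at (x₀,y₀,z₀) are orthogonal. -/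
/-- Confocal quadrics in `ℝ³` intersect orthogonally: if `λ ≠ μ` and `(x₀,y₀,z₀)` lies
on both `Q_λ` and `Q_μ`, then the gradients of `F_λ` and `F_μ` there are orthogonal. -/
theorem stmt10 (a b c lam mu x0 y0 z0 : ℝ) (hab : b < a) (hbc : c < b) (hc : 0 < c)
    (hla : lam ≠ a) (hlb : lam ≠ b) (hlc : lam ≠ c)
    (hma : mu ≠ a) (hmb : mu ≠ b) (hmc : mu ≠ c) (hne : lam ≠ mu)
    (hQl : x0^2/(a-lam) + y0^2/(b-lam) + z0^2/(c-lam) = 1)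
    (hQm : x0^2/(a-mu) + y0^2/(b-mu) + z0^2/(c-mu) = 1) :
    (2*x0/(a-lam))*(2*x0/(a-mu)) + (2*y0/(b-lam))*(2*y0/(b-mu))
      + (2*z0/(c-lam))*(2*z0/(c-mu)) = 0 := by
  have hal : a - lam ≠ 0 := sub_ne_zero.mpr (Ne.symm hla)
  have hbl : b - lam ≠ 0 := sub_ne_zero.mpr (Ne.symm hlb)
  have hcl : c - lam ≠ 0 := sub_ne_zero.mpr (Ne.symm hlc)
  have ham : a - mu ≠ 0 := sub_ne_zero.mpr (Ne.symm hma)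
  have hbm : b - mu ≠ 0 := sub_ne_zero.mpr (Ne.symm hmb)
  have hcm : c - mu ≠ 0 := sub_ne_zero.mpr (Ne.symm hmc)
  have hlm : lam - mu ≠ 0 := sub_ne_zero.mpr hne
  field_simp at hQl hQm
  have key : (lam - mu) * ((2*x0/(a-lam))*(2*x0/(a-mu)) + (2*y0/(b-lam))*(2*y0/(b-mu))
      + (2*z0/(c-lam))*(2*z0/(c-mu))) = 0 := by
    field_simp
    linear_combination 4*(a-mu)*(b-mu)*(c-mu)*hQl - 4*(a-lam)*(b-lam)*(c-lam)*hQm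
  exact (mul_eq_zero.mp key).resolve_left hlm
end

section
/- The intersection of the ellipsoid E : x²/a + y²/b + z²/c = 1 with a confocal one-sheeted hyperboloid Q_β (c < β < b) is symmetric with respect to the plane z = 0 and contains no points with z = 0; consequently it is the disjoint union of its parts in {z > 0} and {z < 0}, each nonempty. -/
/-- The intersection of the ellipsoid `E` with a confocal one-sheeted hyperboloid `Q_β`
(`c < β < b`) is symmetric in `z ↦ -z`, contains no points with `z = 0`, and both parts
in `{z > 0}` and `{z < 0}` are nonempty. -/
theorem stmt11 (a b c β : ℝ) (hab : b < a) (hbc : c < b) (hc : 0 < c)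
    (hβ1 : c < β) (hβ2 : β < b) :
    (∀ x y z : ℝ,
      x^2/a + y^2/b + z^2/c = 1 → x^2/(a-β) + y^2/(b-β) + z^2/(c-β) = 1 →
      (x^2/a + y^2/b + (-z)^2/c = 1 ∧ x^2/(a-β) + y^2/(b-β) + (-z)^2/(c-β) = 1)) ∧
    (∀ x y z : ℝ,
      x^2/a + y^2/b + z^2/c = 1 → x^2/(a-β) + y^2/(b-β) + z^2/(c-β) = 1 → z ≠ 0) ∧
    (∃ x y z : ℝ, x^2/a + y^2/b + z^2/c = 1 ∧
      x^2/(a-β) + y^2/(b-β) + z^2/(c-β) = 1 ∧ 0 < z) ∧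
    (∃ x y z : ℝ, x^2/a + y^2/b + z^2/c = 1 ∧
      x^2/(a-β) + y^2/(b-β) + z^2/(c-β) = 1 ∧ z < 0) := by
  have hb : (0:ℝ) < b := hc.trans hbc
  have ha : (0:ℝ) < a := hb.trans hab
  have hbβ : (0:ℝ) < b - β := by linarith
  have haβ : (0:ℝ) < a - β := by linarith
  have hβc : (0:ℝ) < β - c := by linarith
  have hbc' : (0:ℝ) < b - c := by linarith
  refine ⟨fun x y z h1 h2 => ⟨by rw [neg_sq]; exact h1, by rw [neg_sq]; exact h2⟩,
    ?_, ?_, ?_⟩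
  · intro x y z h1 h2 hz
    subst hz
    norm_num at h1 h2
    -- x²/a + y²/b = 1 and x²/(a-β) + y²/(b-β) = 1
    have hx2 : 0 ≤ x^2 := sq_nonneg x
    have hy2 : 0 ≤ y^2 := sq_nonneg y
    by_cases hx : x = 0
    · subst hx
      norm_num at h1 h2
      have hy : y ≠ 0 := by
        intro h; subst h; simp at h1
      have : y^2 / (b - β) > y^2 / b := by
        apply div_lt_div_of_pos_left (by positivity) hbβ (by linarith)
      rw [h1, h2] at this; exact lt_irrefl _ this
    · have h1' : x^2 / (a - β) > x^2 / a :=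
        div_lt_div_of_pos_left (by positivity) haβ (by linarith)
      have h2' : y^2 / (b - β) ≥ y^2 / b := by
        apply div_le_div_of_nonneg_left hy2 hbβ (by linarith)
      nlinarith
  · refine ⟨0, Real.sqrt (b*(b-β)/(b-c)), Real.sqrt (c*(β-c)/(b-c)), ?_, ?_, ?_⟩
    · rw [Real.sq_sqrt (by positivity), Real.sq_sqrt (by positivity)]
      field_simp
      ring
    · rw [Real.sq_sqrt (by positivity), Real.sq_sqrt (by positivity)]
      have : c - β ≠ 0 := by linarith
      field_simp
      ring
    · positivity
  · refine ⟨0, Real.sqrt (b*(b-β)/(b-c)), -Real.sqrt (c*(β-c)/(b-c)), ?_, ?_, ?_⟩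
    · rw [neg_sq]
      rw [Real.sq_sqrt (by positivity), Real.sq_sqrt (by positivity)]
      field_simp
      ring
    · rw [neg_sq]
      rw [Real.sq_sqrt (by positivity), Real.sq_sqrt (by positivity)]
      have : c - β ≠ 0 := by linarith
      field_simp
      ring
    · simp only [Left.neg_neg_iff]
      positivity
end

section
/- For the billiard inside the ellipse E, a trajectory segment whose line does not intersect the open segment between the foci has an ellipse as caustic (tangency parameter μ ∈ (0, b)), while a segment whose line crosses the open segment between the foci has a hyperbola as caustic (μ ∈ (b, a)). -/
/-!
Clearing the positive denominator `u² + v²`, the inequality `m < μ` becomes the tangency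
expression `(a - m)u² + (b - m)v² > 1`. For `m = b` this reads `(a - b)u² > 1`, which says
exactly that the point `(1/u, 0)` where the line meets the focal axis lies strictly between
the foci; `μ < a` always holds. For `m = 0` it reads `au² + bv² > 1`, and `√(au² + bv²)` is
the maximum of `ux + vy` on `E` (weighted Cauchy–Schwarz), so this says that the line
meets the interior of `E`.
-/

noncomputable def causticParam (a b u v : ℝ) : ℝ :=
  (a * u ^ 2 + b * v ^ 2 - 1) / (u ^ 2 + v ^ 2)

section CausticParam

variable {a b u v : ℝ}

theorem lt_causticParam_iff (hs : 0 < u ^ 2 + v ^ 2) (m : ℝ) :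
    m < causticParam a b u v ↔ 1 < (a - m) * u ^ 2 + (b - m) * v ^ 2 := by
  rw [causticParam, lt_div_iff₀ hs]
  constructor <;> intro h <;> linarith

theorem causticParam_lt_iff (hs : 0 < u ^ 2 + v ^ 2) (m : ℝ) :
    causticParam a b u v < m ↔ (a - m) * u ^ 2 + (b - m) * v ^ 2 < 1 := by
  rw [causticParam, div_lt_iff₀ hs]
  constructor <;> intro h <;> linarith

end CausticParam

section FocalSegment

variable {u x r : ℝ}

theorem abs_lt_sqrt_iff_of_mul_eq_one (h : u * x = 1) : |x| < √r ↔ 1 < r * u ^ 2 := by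
  have hu : 0 < u ^ 2 := by positivity [left_ne_zero_of_mul_eq_one h]
  rw [Real.lt_sqrt (abs_nonneg x), sq_abs, ← mul_lt_mul_iff_right₀ hu, ← mul_pow, h]
  constructor <;> intro h' <;> linarith

theorem abs_le_sqrt_iff_of_mul_eq_one (h : u * x = 1) : |x| ≤ √r ↔ 1 ≤ r * u ^ 2 := by
  have hu : 0 < u ^ 2 := by positivity [left_ne_zero_of_mul_eq_one h]
  have hx : 0 < |x| := abs_pos.2 (right_ne_zero_of_mul_eq_one h)
  rw [Real.le_sqrt' hx, sq_abs, ← mul_le_mul_iff_right₀ hu, ← mul_pow, h]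
  constructor <;> intro h' <;> linarith

theorem exists_abs_lt_sqrt_mul_eq_one_iff :
    (∃ x, |x| < √r ∧ u * x = 1) ↔ 1 < r * u ^ 2 := by
  constructor
  · rintro ⟨x, hx, h⟩
    exact (abs_lt_sqrt_iff_of_mul_eq_one h).1 hx
  · intro h
    have hu : u ≠ 0 := by rintro rfl; simp at h; linarith
    have hux : u * u⁻¹ = 1 := mul_inv_cancel₀ hu
    exact ⟨u⁻¹, (abs_lt_sqrt_iff_of_mul_eq_one hux).2 h, hux⟩

theorem forall_abs_le_sqrt_mul_ne_one_iff :
    (∀ x, |x| ≤ √r → u * x ≠ 1) ↔ r * u ^ 2 < 1 := by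
  constructor
  · intro h
    by_contra! hge
    have hu : u ≠ 0 := by rintro rfl; simp at hge; linarith
    have hux : u * u⁻¹ = 1 := mul_inv_cancel₀ hu
    exact h u⁻¹ ((abs_le_sqrt_iff_of_mul_eq_one hux).2 hge) hux
  · intro h x hx hux
    linarith [(abs_le_sqrt_iff_of_mul_eq_one hux).1 hx]

end FocalSegment

section EllipseInterior

variable {a b u v : ℝ}

theorem sq_mul_add_mul_le_mul (ha : 0 < a) (hb : 0 < b) (x y : ℝ) :
    (u * x + v * y) ^ 2 ≤ (a * u ^ 2 + b * v ^ 2) * (x ^ 2 / a + y ^ 2 / b) := by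
  rw [div_add_div _ _ ha.ne' hb.ne', mul_div_assoc', le_div_iff₀ (mul_pos ha hb)]
  nlinarith [sq_nonneg (a * u * y - b * v * x)]

theorem exists_ellipse_interior_mem_line_iff (ha : 0 < a) (hb : 0 < b) :
    (∃ p : ℝ × ℝ, p.1 ^ 2 / a + p.2 ^ 2 / b < 1 ∧ u * p.1 + v * p.2 = 1) ↔
      1 < a * u ^ 2 + b * v ^ 2 := by
  constructor
  · rintro ⟨⟨x, y⟩, hin, hline⟩
    have hcs := sq_mul_add_mul_le_mul (u := u) (v := v) ha hb x y
    rw [hline] at hcs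
    have hq : 0 ≤ x ^ 2 / a + y ^ 2 / b := by positivity
    nlinarith
  · intro h
    set c := a * u ^ 2 + b * v ^ 2 with hc
    have hc0 : 0 < c := by linarith
    refine ⟨(a * u / c, b * v / c), ?_, ?_⟩
    · have : (a * u / c) ^ 2 / a + (b * v / c) ^ 2 / b = 1 / c := by
        field_simp
        ring
      rw [this, div_lt_one hc0]
      exact h
    · field_simp
      ring

end EllipseInterior

/-- For a billiard chord of `E` on the line `ux + vy = 1`, whose caustic parameter is
`μ = (au² + bv² - 1)/(u² + v²)`: the caustic is a hyperbola (`μ ∈ (b, a)`) iff the line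
meets the open focal segment `{(x,0) : |x| < √(a-b)}`, and the caustic is an ellipse
(`μ ∈ (0, b)`) iff the line misses the closed focal segment and meets the interior of
`E`. -/
theorem stmt16 (a b u v μ : ℝ) (hab : b < a) (hb : 0 < b)
    (huv : u^2 + v^2 ≠ 0)
    (hμ : μ = (a*u^2 + b*v^2 - 1)/(u^2 + v^2)) :
    ((b < μ ∧ μ < a) ↔ ∃ x : ℝ, |x| < Real.sqrt (a - b) ∧ u*x + v*0 = 1) ∧
    ((0 < μ ∧ μ < b) ↔
      ((∀ x : ℝ, |x| ≤ Real.sqrt (a - b) → u*x + v*0 ≠ 1) ∧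
        ∃ p : ℝ × ℝ, p.1^2/a + p.2^2/b < 1 ∧ u*p.1 + v*p.2 = 1)) := by
  have hs : 0 < u ^ 2 + v ^ 2 := lt_of_le_of_ne (by positivity) huv.symm
  change μ = causticParam a b u v at hμ
  subst hμ
  have hμa : causticParam a b u v < a :=
    (causticParam_lt_iff hs a).2 (by nlinarith [sq_nonneg v])
  simp only [mul_zero, add_zero, and_iff_left hμa]
  rw [exists_abs_lt_sqrt_mul_eq_one_iff, forall_abs_le_sqrt_mul_ne_one_iff,
    exists_ellipse_interior_mem_line_iff (hb.trans hab) hb, lt_causticParam_iff hs,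
    lt_causticParam_iff hs, causticParam_lt_iff hs]
  simp only [sub_self, sub_zero, zero_mul, add_zero, true_and]
  exact and_comm
end
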